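/- Let K be a field with a ring topology τ and let S be a τ-bounded, τ-open subring of K with S ≠ K. Then τ equals the S-adic topology on K. -/

import Mathlib

open Topology

/-- The collection `{aS + b : a ∈ K^×, b ∈ K}`, a basis for the `S`-adic topology. -/
def adicBasis {K : Type*} [Field K] (S : Subring K) : Set (Set K) :=
  {s | ∃ a b : K, a ≠ 0 ∧ s = {x | ∃ r ∈ S, x = a * r + b}}

/-- The `S`-adic topology on `K`: the topology with basis `{aS + b : a ∈ K^×, b ∈ K}`. -/
def adicTopology {K : Type*} [Field K] (S : Subring K) : TopologicalSpace K :=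
  TopologicalSpace.generateFrom (adicBasis S)

/-!
Boundedness of `S` together with non-discreteness gives, inside every neighbourhood `U` of `0`,
a nonzero `a` with `aS ⊆ U`; translating, every `τ`-open set is a union of sets `aS + b`.
Conversely `aS + b` is the preimage of the open set `S` under the homeomorphism
`x ↦ (x - b) a⁻¹`, hence `τ`-open.
-/

theorem exists_mem_ne_zero_of_mem_nhds_zero {G : Type*} [TopologicalSpace G] [AddGroup G]
    [IsTopologicalAddGroup G] (hnd : ¬ DiscreteTopology G) {U : Set G} (hU : U ∈ 𝓝 0) :
    ∃ a ∈ U, a ≠ 0 := by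
  by_contra! h
  refine hnd (discreteTopology_iff_isOpen_singleton_zero.mpr ?_)
  obtain ⟨W, hWU, hWo, hW0⟩ := mem_nhds_iff.mp hU
  rwa [← Set.eq_singleton_iff_unique_mem.mpr ⟨hW0, fun x hx => h x (hWU hx)⟩]

theorem exists_ne_zero_mul_mem_of_mem_nhds_zero {R : Type*} [TopologicalSpace R] [Ring R]
    [IsTopologicalRing R] (hnd : ¬ DiscreteTopology R) {B : Set R}
    (hB : ∀ U ∈ 𝓝 (0 : R), ∃ V ∈ 𝓝 (0 : R), ∀ v ∈ V, ∀ b ∈ B, v * b ∈ U)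
    {U : Set R} (hU : U ∈ 𝓝 0) : ∃ a ≠ 0, ∀ b ∈ B, a * b ∈ U := by
  obtain ⟨V, hV, hVB⟩ := hB U hU
  obtain ⟨a, haV, ha⟩ := exists_mem_ne_zero_of_mem_nhds_zero hnd hV
  exact ⟨a, ha, hVB a haV⟩

theorem setOf_mul_add_eq_preimage {K : Type*} [Field K] (S : Subring K)
    {a : K} (ha : a ≠ 0) (b : K) :
    {x | ∃ r ∈ S, x = a * r + b} = (fun x => (x - b) * a⁻¹) ⁻¹' S := by
  ext x
  constructor
  · rintro ⟨r, hr, rfl⟩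
    rwa [Set.mem_preimage, add_sub_cancel_right, mul_comm, inv_mul_cancel_left₀ ha]
  · intro hx
    exact ⟨(x - b) * a⁻¹, hx, by field_simp; ring⟩

section adicTopology

variable {K : Type*} [Field K] [t : TopologicalSpace K] {S : Subring K}

theorem isOpen_of_mem_adicBasis [IsTopologicalRing K] (hopen : IsOpen (S : Set K))
    {s : Set K} (hs : s ∈ adicBasis S) : IsOpen s := by
  obtain ⟨a, b, ha, rfl⟩ := hs
  rw [setOf_mul_add_eq_preimage S ha b]
  exact hopen.preimage ((continuous_id.sub continuous_const).mul continuous_const)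

theorem le_adicTopology [IsTopologicalRing K] (hopen : IsOpen (S : Set K)) :
    t ≤ adicTopology S :=
  le_generateFrom fun _ => isOpen_of_mem_adicBasis hopen

theorem adicTopology_le [ContinuousAdd K]
    (h : ∀ U ∈ 𝓝 (0 : K), ∃ a ≠ 0, ∀ r ∈ S, a * r ∈ U) : adicTopology S ≤ t := by
  intro U hU
  refine (@isOpen_iff_forall_mem_open K (adicTopology S) U).mpr fun x hx => ?_
  have hUx : (· + x) ⁻¹' U ∈ 𝓝 (0 : K) :=
    (continuous_add_const x).continuousAt.preimage_mem_nhds (by simpa using hU.mem_nhds hx)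
  obtain ⟨a, ha, haU⟩ := h _ hUx
  refine ⟨{y | ∃ r ∈ S, y = a * r + x}, ?_, ?_, ⟨0, S.zero_mem, by ring⟩⟩
  · rintro y ⟨r, hr, rfl⟩
    exact haU r hr
  · exact TopologicalSpace.isOpen_generateFrom_of_mem ⟨a, x, ha, rfl⟩

end adicTopology

theorem statement18_general {K : Type*} [Field K] [t : TopologicalSpace K]
    [IsTopologicalRing K]
    (hnd : ¬ DiscreteTopology K)
    (S : Subring K)
    (hopen : IsOpen (S : Set K))
    (hbdd : ∀ U ∈ nhds (0 : K), ∃ V ∈ nhds (0 : K), ∀ v ∈ V, ∀ b ∈ (S : Set K), v * b ∈ U) :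
    t = adicTopology S :=
  le_antisymm (le_adicTopology hopen)
    (adicTopology_le fun _ hU => exists_ne_zero_mul_mem_of_mem_nhds_zero hnd hbdd hU)

/-- Let `K` be a field with a ring topology `τ` and let `S` be a `τ`-bounded,
`τ`-open subring of `K` with `S ≠ K`. Then `τ` equals the `S`-adic topology on `K`. -/
theorem statement18 {K : Type*} [Field K] [t : TopologicalSpace K]
    [IsTopologicalRing K] [T2Space K]
    (hnd : ¬ DiscreteTopology K)
    (S : Subring K) (hS : S ≠ ⊤)
    (hopen : IsOpen (S : Set K))
    (hbdd : ∀ U ∈ nhds (0 : K), ∃ V ∈ nhds (0 : K), ∀ v ∈ V, ∀ b ∈ (S : Set K), v * b ∈ U) :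
    t = adicTopology S :=
  statement18_general (t := t) hnd S hopen hbdd
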